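/- arXiv:2206.00927 — 3 statements merged into one kernel-verified Lean document; each statement's English description precedes it below -/
import Mathlib

section
/- Suppose x satisfies the ODE dx/dt = (d log α/dt)·x + (g²(t)/(2σ(t)))·ε(t), where g²(t) = −2σ²(t)·dλ/dt and λ(t) = log(α(t)/σ(t)). Then for s > t, x(t) = (α(t)/α(s)) x(s) − α(t) ∫_{λ(s)}^{λ(t)} e^{−λ} ε̂(λ) dλ, where ε̂(λ) = ε(t_λ(λ)) and t_λ is the inverse function of λ(t). -/
/-!
Dividing by `α` is an integrating factor: `d/du (x/α) = (g²/(2σ)) ε / α`, and since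
`g² = -2σ² λ'` and `σ/α = e^{-λ}`, this is `-e^{-λ(u)} ε(u) λ'(u)`. Hence
`x/α + ∫_{λ(s)}^{λ(u)} e^{-l} ε(t_λ l) dl` has zero derivative, so it takes the same value at
`u = t` and `u = s`.
-/

open Real

theorem continuous_of_strictAnti_of_leftInverse {α β : Type*} [LinearOrder α]
    [TopologicalSpace α] [OrderTopology α] [DenselyOrdered α] [LinearOrder β]
    [TopologicalSpace β] [OrderTopology β] {f : α → β} {g : β → α} (hf : StrictAnti f)
    (hgf : Function.LeftInverse g f) (hfg : Function.RightInverse g f) : Continuous g := by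
  have hg_mono : Monotone (OrderDual.toDual ∘ g) := fun a b hab =>
    show g b ≤ g a from hf.le_iff_ge.1 (by rwa [hfg a, hfg b])
  exact continuous_ofDual.comp (hg_mono.continuous_of_surjective
    (OrderDual.toDual.surjective.comp hgf.surjective))

theorem hasDerivAt_div_of_eq_logDeriv_mul_add {x α : ℝ → ℝ} {u x' α' r : ℝ}
    (hx : HasDerivAt x x' u) (hα : HasDerivAt α α' u) (hα0 : α u ≠ 0)
    (hode : x' = α' / α u * x u + r) : HasDerivAt (fun v => x v / α v) (r / α u) u := by
  refine (hx.div hα hα0).congr_deriv ?_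
  rw [hode]
  field_simp
  ring

theorem deriv_sq_sub_two_deriv_log_mul_sq {α σ : ℝ → ℝ} {u : ℝ}
    (hα : DifferentiableAt ℝ α u) (hσ : DifferentiableAt ℝ σ u) (hα0 : α u ≠ 0)
    (hσ0 : σ u ≠ 0) :
    deriv (fun v => σ v ^ 2) u - 2 * deriv (fun v => log (α v)) u * σ u ^ 2 =
      -2 * σ u ^ 2 * deriv (fun v => log (α v) - log (σ v)) u := by
  rw [deriv_fun_pow hσ, deriv_fun_sub (hα.log hα0) (hσ.log hσ0), deriv.log hα hα0,
    deriv.log hσ hσ0]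
  field_simp
  ring

theorem eq_sub_integral_of_hasDerivAt_eq_neg_comp_mul {y φ φ' f : ℝ → ℝ} (hf : Continuous f)
    (hφ : ∀ u, HasDerivAt φ (φ' u) u) (hy : ∀ u, HasDerivAt y (-(f (φ u) * φ' u)) u)
    (s t : ℝ) : y t = y s - ∫ l in φ s..φ t, f l := by
  set H : ℝ → ℝ := fun u => y u + ∫ l in φ s..φ u, f l
  have hH : ∀ u, HasDerivAt H 0 u := fun u => by
    simpa using (hy u).fun_add
      ((hf.integral_hasStrictDerivAt (φ s) (φ u)).hasDerivAt.comp u (hφ u))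
  have hHts : H t = H s :=
    is_const_of_deriv_eq_zero (fun u => (hH u).differentiableAt) (fun u => (hH u).deriv) t s
  simp only [H, intervalIntegral.integral_same, add_zero] at hHts
  linarith

theorem stmt2_general (α σ : ℝ → ℝ) (hα : ∀ t, 0 < α t) (hσ : ∀ t, 0 < σ t)
    (hαd : Differentiable ℝ α) (hσd : Differentiable ℝ σ)
    (lam : ℝ → ℝ) (hlam : ∀ t, lam t = Real.log (α t) - Real.log (σ t))
    (hanti : StrictAnti lam)
    (tlam : ℝ → ℝ) (hinv : ∀ t, tlam (lam t) = t) (hinv' : ∀ v, lam (tlam v) = v)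
    (ε : ℝ → ℝ) (hε : Continuous ε)
    (g2 : ℝ → ℝ)
    (hg2 : ∀ t, g2 t = deriv (fun u => (σ u) ^ 2) t -
      2 * deriv (fun u => Real.log (α u)) t * (σ t) ^ 2)
    (x : ℝ → ℝ) (hx : Differentiable ℝ x)
    (hode : ∀ u, deriv x u = deriv (fun v => Real.log (α v)) u * x u + g2 u / (2 * σ u) * ε u)
    (s t : ℝ) :
    x t = α t / α s * x s -
      α t * ∫ l in lam s..lam t, Real.exp (-l) * ε (tlam l) := by
  have hlam_eq : lam = fun v => log (α v) - log (σ v) := funext hlam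
  have hlamd : Differentiable ℝ lam := hlam_eq ▸ fun u =>
    ((hαd u).log (hα u).ne').sub ((hσd u).log (hσ u).ne')
  have htlam : Continuous tlam := continuous_of_strictAnti_of_leftInverse hanti hinv hinv'
  have hexp : ∀ u, exp (-lam u) = σ u / α u := fun u => by
    rw [hlam, neg_sub, exp_sub, exp_log (hσ u), exp_log (hα u)]
  have hy : ∀ u, HasDerivAt (fun v => x v / α v)
      (-(exp (-lam u) * ε (tlam (lam u)) * deriv lam u)) u := fun u => by
    refine (hasDerivAt_div_of_eq_logDeriv_mul_add (hx u).hasDerivAt (hαd u).hasDerivAt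
      (hα u).ne' (by rw [hode u, deriv.log (hαd u) (hα u).ne'])).congr_deriv ?_
    rw [hinv, hexp, hg2, hlam_eq, deriv_sq_sub_two_deriv_log_mul_sq (hαd u) (hσd u) (hα u).ne'
      (hσ u).ne']
    field_simp
  have hxα := eq_sub_integral_of_hasDerivAt_eq_neg_comp_mul
    (f := fun l => exp (-l) * ε (tlam l)) (by fun_prop) (fun u => (hlamd u).hasDerivAt)
    hy s t
  have hαt := (hα t).ne'
  have hαs := (hα s).ne'
  field_simp at hxα ⊢
  linarith

/-- Exact solution of the diffusion ODE: if `x' = (log α)' x + (g²/(2σ)) ε` with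
`g² = (σ²)' − 2 (log α)' σ²`, `λ(t) = log(α(t)/σ(t))` strictly decreasing with inverse `t_λ`,
then `x t = (α t / α s) x s − α t ∫_{λ(s)}^{λ(t)} e^{−λ} ε(t_λ(λ)) dλ` for `s > t`. -/
theorem stmt2 (α σ : ℝ → ℝ) (hα : ∀ t, 0 < α t) (hσ : ∀ t, 0 < σ t)
    (hαd : Differentiable ℝ α) (hσd : Differentiable ℝ σ)
    (lam : ℝ → ℝ) (hlam : ∀ t, lam t = Real.log (α t) - Real.log (σ t))
    (hanti : StrictAnti lam)
    (tlam : ℝ → ℝ) (hinv : ∀ t, tlam (lam t) = t) (hinv' : ∀ v, lam (tlam v) = v)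
    (ε : ℝ → ℝ) (hε : Continuous ε)
    (g2 : ℝ → ℝ)
    (hg2 : ∀ t, g2 t = deriv (fun u => (σ u) ^ 2) t -
      2 * deriv (fun u => Real.log (α u)) t * (σ t) ^ 2)
    (x : ℝ → ℝ) (hx : Differentiable ℝ x)
    (hode : ∀ u, deriv x u = deriv (fun v => Real.log (α v)) u * x u + g2 u / (2 * σ u) * ε u)
    (s t : ℝ) (hst : t < s) :
    x t = α t / α s * x s -
      α t * ∫ l in lam s..lam t, Real.exp (-l) * ε (tlam l) :=
  stmt2_general α σ hα hσ hαd hσd lam hlam hanti tlam hinv hinv' ε hε g2 hg2 x hx hode s t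
end

section
/- Consider the scheme for the ODE x' = f(t)x + b(t) over one step: x̃_t = (α_t/α_s)x_s − σ_t(e^h − 1)b̂(λ_s), where b̂(λ) = e^{λ} · (the nonlinear part evaluated along the exact solution), h = λ_t − λ_s, and the exact solution is x_t = (α_t/α_s)x_s − α_t ∫_{λ_s}^{λ_t} e^{−λ} b̂(λ)dλ. If b̂ is C¹ with |b̂'| ≤ L on [λ_t, λ_s], then |x_t − x̃_t| ≤ α_t · L · e^{|λ_s|+|h|} · h²/2. -/
/-!
Since `σ_t (e^h - 1) = α_t ∫_{λ_s}^{λ_t} e^{-λ} dλ`, subtracting the scheme from the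
variation-of-constants formula leaves `-α_t ∫_{λ_s}^{λ_t} e^{-λ} (b̂ λ - b̂ λ_s) dλ`.
By the mean value theorem the integrand is at most `L e^{-λ_s} (λ - λ_s)` in absolute value,
which integrates to `L e^{-λ_s} h² / 2`, and `e^{-λ_s} ≤ e^{|λ_s| + |h|}`.
-/

open Real Set intervalIntegral

lemma abs_integral_le_of_abs_le_mul_sub {f : ℝ → ℝ} {a c K : ℝ} (hac : a ≤ c)
    (hf : ∀ l ∈ Icc a c, |f l| ≤ K * (l - a)) :
    |∫ l in a..c, f l| ≤ K * (c - a) ^ 2 / 2 := by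
  have hK : ∫ l in a..c, K * (l - a) = K * (c - a) ^ 2 / 2 := by
    rw [integral_const_mul, integral_comp_sub_right (fun l => l), integral_id]
    ring
  rw [← hK]
  refine norm_integral_le_of_norm_le (f := f) hac
    (.of_forall fun l hl => hf l (Ioc_subset_Icc_self hl)) ?_
  exact (continuous_const.mul (continuous_id.sub continuous_const)).intervalIntegrable _ _

lemma integral_exp_neg (a c : ℝ) : ∫ l in a..c, exp (-l) = exp (-a) - exp (-c) := by
  rw [integral_comp_neg (fun l => exp l), integral_exp]

lemma integral_exp_neg_mul_sub_eq {b : ℝ → ℝ} {a c : ℝ} (hb : ContinuousOn b (uIcc a c)) :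
    ∫ l in a..c, exp (-l) * (b l - b a)
      = (∫ l in a..c, exp (-l) * b l) - (exp (-a) - exp (-c)) * b a := by
  have hexp : Continuous fun l => exp (-l) := by fun_prop
  have hint : IntervalIntegrable (fun l => exp (-l) * b l) MeasureTheory.volume a c :=
    (hexp.continuousOn.mul hb).intervalIntegrable
  have hint' : IntervalIntegrable (fun l => exp (-l) * b a) MeasureTheory.volume a c :=
    (hexp.mul continuous_const).intervalIntegrable _ _
  simp only [mul_sub]
  rw [integral_sub hint hint', integral_mul_const, integral_exp_neg]

lemma abs_exp_neg_mul_sub_le {b b' : ℝ → ℝ} {a c L : ℝ}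
    (hb : ∀ l ∈ Icc a c, HasDerivAt b (b' l) l) (hL : ∀ l ∈ Icc a c, |b' l| ≤ L)
    {l : ℝ} (hl : l ∈ Icc a c) :
    |exp (-l) * (b l - b a)| ≤ L * exp (-a) * (l - a) := by
  have hmvt : |b l - b a| ≤ L * (l - a) :=
    norm_image_sub_le_of_norm_deriv_le_segment' (fun x hx => (hb x hx).hasDerivWithinAt)
      (fun x hx => hL x (Ico_subset_Icc_self hx)) l hl
  have hexp : exp (-l) ≤ exp (-a) := exp_le_exp.mpr (neg_le_neg hl.1)
  calc |exp (-l) * (b l - b a)| = exp (-l) * |b l - b a| := by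
        rw [abs_mul, abs_of_pos (exp_pos _)]
    _ ≤ exp (-a) * (L * (l - a)) := by gcongr
    _ = L * exp (-a) * (l - a) := by ring

theorem stmt16_general (lams lamt αs αt σt xs L : ℝ)
    (hh : 0 < lamt - lams) (hαt : 0 < αt)
    (hσt : σt = αt * Real.exp (-lamt))
    (b b' : ℝ → ℝ)
    (hb : ∀ l ∈ Set.Icc lams lamt, HasDerivAt b (b' l) l)
    (hL : ∀ l ∈ Set.Icc lams lamt, |b' l| ≤ L)
    (xt xtApprox : ℝ)
    (hxt : xt = αt / αs * xs - αt * ∫ l in lams..lamt, Real.exp (-l) * b l)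
    (hxa : xtApprox = αt / αs * xs - σt * (Real.exp (lamt - lams) - 1) * b lams) :
    |xt - xtApprox| ≤ αt * L * Real.exp (|lams| + |lamt - lams|) * (lamt - lams) ^ 2 / 2 := by
  have hle : lams ≤ lamt := sub_pos.mp hh |>.le
  have hbc : ContinuousOn b (uIcc lams lamt) := by
    rw [uIcc_of_le hle]
    exact fun l hl => (hb l hl).continuousAt.continuousWithinAt
  have hσ : σt * (exp (lamt - lams) - 1) = αt * (exp (-lams) - exp (-lamt)) := by
    rw [hσt, mul_assoc, mul_sub, ← exp_add]
    ring_nf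
  have herror : xt - xtApprox = -(αt * ∫ l in lams..lamt, exp (-l) * (b l - b lams)) := by
    rw [hxt, hxa, hσ, integral_exp_neg_mul_sub_eq hbc]
    ring
  have hquad := abs_integral_le_of_abs_le_mul_sub hle
    (fun l hl => abs_exp_neg_mul_sub_le hb hL hl)
  have hL0 : 0 ≤ L := (abs_nonneg _).trans (hL lams ⟨le_rfl, hle⟩)
  have hexp : exp (-lams) ≤ exp (|lams| + |lamt - lams|) :=
    exp_le_exp.mpr ((neg_le_abs lams).trans (le_add_of_nonneg_right (abs_nonneg _)))
  rw [herror, abs_neg, abs_mul, abs_of_pos hαt]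
  calc αt * |∫ l in lams..lamt, exp (-l) * (b l - b lams)|
      ≤ αt * (L * exp (-lams) * (lamt - lams) ^ 2 / 2) := by gcongr
    _ ≤ αt * (L * exp (|lams| + |lamt - lams|) * (lamt - lams) ^ 2 / 2) := by gcongr
    _ = αt * L * exp (|lams| + |lamt - lams|) * (lamt - lams) ^ 2 / 2 := by ring

/-- Local truncation error bound for DPM-Solver-1: if `b̂` is `C¹` with `|b̂'| ≤ L` on
`[λ_s, λ_t]`, `h = λ_t − λ_s > 0`, `σ_t = α_t e^{−λ_t}`, then the one-step error satisfies
`|x_t − x̃_t| ≤ α_t · L · e^{|λ_s| + |h|} · h²/2`. -/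
theorem stmt16 (lams lamt αs αt σt xs L : ℝ)
    (hh : 0 < lamt - lams) (hαs : 0 < αs) (hαt : 0 < αt)
    (hσt : σt = αt * Real.exp (-lamt))
    (b b' : ℝ → ℝ)
    (hb : ∀ l ∈ Set.Icc lams lamt, HasDerivAt b (b' l) l)
    (hb' : ContinuousOn b' (Set.Icc lams lamt))
    (hL : ∀ l ∈ Set.Icc lams lamt, |b' l| ≤ L)
    (xt xtApprox : ℝ)
    (hxt : xt = αt / αs * xs - αt * ∫ l in lams..lamt, Real.exp (-l) * b l)
    (hxa : xtApprox = αt / αs * xs - σt * (Real.exp (lamt - lams) - 1) * b lams) :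
    |xt - xtApprox| ≤ αt * L * Real.exp (|lams| + |lamt - lams|) * (lamt - lams) ^ 2 / 2 :=
  stmt16_general lams lamt αs αt σt xs L hh hαt hσt b b' hb hL xt xtApprox hxt hxa
end

section
/- For a C² function ε̂ : ℝ → ℝ, the quantity ∫_{λ_s}^{λ_s+h} e^{−λ} ε̂(λ) dλ equals e^{−λ_s−h}[hφ_1(h)ε̂(λ_s) + h²φ_2(h)ε̂'(λ_s)] + R where |R| ≤ e^{−λ_s−h}·(sup_{[λ_s,λ_s+h]}|ε̂''|)·h³φ_3(h), with φ_k as the exponential integrator functions. -/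
/-!
Subtract from `ε̂` its first-order Taylor polynomial at `λ_s`. Against the weight `e^{-λ}` the
monomials integrate exactly: `-e^{-x} ∑_{k ≤ n} (x - a)^k / k!` is an antiderivative of
`e^{-x} (x - a)^n / n!`, so `∫_a^{a+h} e^{-x} (x - a)^n / n! dx = e^{-a-h} h^{n+1} φ_{n+1}(h)`.
The Taylor remainder is bounded by `M (x - a)^2 / 2`, whose weighted integral is the case `n = 2`.
-/

open Real Set Finset intervalIntegral
open scoped Nat

theorem hasDerivAt_sum_range_pow_div_factorial (n : ℕ) (x : ℝ) :
    HasDerivAt (fun y : ℝ => ∑ k ∈ range (n + 1), y ^ k / k !) (∑ k ∈ range n, x ^ k / k !) x := by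
  induction n with
  | zero => simpa using hasDerivAt_const x (1 : ℝ)
  | succ n ih =>
    have hterm : HasDerivAt (fun y : ℝ => y ^ (n + 1) / (n + 1)!) (x ^ n / n !) x := by
      refine ((hasDerivAt_pow (n + 1) x).div_const _).congr_deriv ?_
      rw [Nat.factorial_succ]
      push_cast
      field_simp
    rw [sum_range_succ _ n]
    simp_rw [sum_range_succ _ (n + 1)]
    exact ih.fun_add hterm

theorem hasDerivAt_exp_neg_mul_sum_range_pow_div_factorial (n : ℕ) (a x : ℝ) :
    HasDerivAt (fun y => -exp (-y) * ∑ k ∈ range (n + 1), (y - a) ^ k / k !)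
      (exp (-x) * ((x - a) ^ n / n !)) x := by
  have hexp : HasDerivAt (fun y => -exp (-y)) (exp (-x)) x := by
    simpa using ((hasDerivAt_neg x).exp).fun_neg
  have hsum := (hasDerivAt_sum_range_pow_div_factorial n (x - a)).comp_sub_const x a
  refine (hexp.fun_mul hsum).congr_deriv ?_
  rw [sum_range_succ]
  ring

theorem integral_exp_neg_mul_pow_div_factorial (n : ℕ) (a b : ℝ) :
    ∫ x in a..b, exp (-x) * ((x - a) ^ n / n !) =
      exp (-a) - exp (-b) * ∑ k ∈ range (n + 1), (b - a) ^ k / k ! := by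
  rw [integral_eq_sub_of_hasDerivAt
    (fun x _ => hasDerivAt_exp_neg_mul_sum_range_pow_div_factorial n a x)
    (Continuous.intervalIntegrable (by fun_prop) a b)]
  simp [sum_range_succ']
  ring

theorem norm_sub_sub_smul_le_of_norm_deriv2_le {E : Type*} [NormedAddCommGroup E]
    [NormedSpace ℝ E] {f f' f'' : ℝ → E} {a b M : ℝ}
    (hf : ∀ x ∈ Icc a b, HasDerivAt f (f' x) x) (hf' : ∀ x ∈ Icc a b, HasDerivAt f' (f'' x) x)
    (hM : ∀ x ∈ Icc a b, ‖f'' x‖ ≤ M) {x : ℝ} (hx : x ∈ Icc a b) :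
    ‖f x - f a - (x - a) • f' a‖ ≤ M * (x - a) ^ 2 / 2 := by
  have hf'_lip : ∀ y ∈ Icc a b, ‖f' y - f' a‖ ≤ M * (y - a) := by
    intro y hy
    have := (convex_Icc a b).norm_image_sub_le_of_norm_hasDerivWithin_le
      (fun z hz => (hf' z hz).hasDerivWithinAt) hM (left_mem_Icc.2 (hy.1.trans hy.2)) hy
    rwa [Real.norm_of_nonneg (sub_nonneg.2 hy.1)] at this
  have hremainder : ∀ y ∈ Icc a b, HasDerivAt (fun z => f z - f a - (z - a) • f' a)
      (f' y - f' a) y := by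
    intro y hy
    simpa using ((hf y hy).sub_const (f a)).fun_sub
      (((hasDerivAt_id y).sub_const a).smul_const (f' a))
  have hbound (y : ℝ) : HasDerivAt (fun z => M * (z - a) ^ 2 / 2) (M * (y - a)) y := by
    have := (((hasDerivAt_id y).sub_const a).pow 2).const_mul M |>.div_const 2
    exact this.congr_deriv (by simp; ring)
  refine image_norm_le_of_norm_deriv_right_le_deriv_boundary'
    (fun y hy => (hremainder y hy).continuousAt.continuousWithinAt)
    (fun y hy => (hremainder y (Ico_subset_Icc_self hy)).hasDerivWithinAt) (by simp)
    (by fun_prop) (fun y _ => (hbound y).hasDerivWithinAt)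
    (fun y hy => hf'_lip y (Ico_subset_Icc_self hy)) hx

theorem abs_integral_exp_neg_mul_le {r : ℝ → ℝ} {a b M : ℝ} (n : ℕ) (hab : a ≤ b)
    (hr : ∀ x ∈ Icc a b, |r x| ≤ M * ((x - a) ^ n / n !)) :
    |∫ x in a..b, exp (-x) * r x| ≤ M * ∫ x in a..b, exp (-x) * ((x - a) ^ n / n !) := by
  rw [← Real.norm_eq_abs, ← integral_const_mul]
  refine norm_integral_le_of_norm_le hab (Filter.Eventually.of_forall fun x hx => ?_)
    (Continuous.intervalIntegrable (by fun_prop) a b)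
  rw [Real.norm_eq_abs, abs_mul, abs_of_pos (exp_pos _), mul_left_comm]
  exact mul_le_mul_of_nonneg_left (hr x (Ioc_subset_Icc_self hx)) (exp_pos _).le

theorem stmt17_general (lams h : ℝ) (hh : 0 < h) (ε ε' ε'' : ℝ → ℝ) (M : ℝ)
    (hd1 : ∀ l ∈ Set.Icc lams (lams + h), HasDerivAt ε (ε' l) l)
    (hd2 : ∀ l ∈ Set.Icc lams (lams + h), HasDerivAt ε' (ε'' l) l)
    (hM : ∀ l ∈ Set.Icc lams (lams + h), |ε'' l| ≤ M) :
    ∃ R : ℝ,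
      (∫ l in lams..lams + h, Real.exp (-l) * ε l) =
        Real.exp (-lams - h) *
          (h * ((Real.exp h - 1) / h) * ε lams +
            h ^ 2 * ((Real.exp h - h - 1) / h ^ 2) * ε' lams) + R ∧
      |R| ≤ Real.exp (-lams - h) * M *
        (h ^ 3 * ((Real.exp h - h ^ 2 / 2 - h - 1) / h ^ 3)) := by
  set r : ℝ → ℝ := fun l => ε l - ε lams - ε' lams * (l - lams)
  have hab : lams ≤ lams + h := by linarith
  have hr_cont : ContinuousOn r (Icc lams (lams + h)) := fun l hl =>
    ((hd1 l hl).continuousAt.sub continuousAt_const |>.sub (by fun_prop)).continuousWithinAt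
  have hr_bound (l : ℝ) (hl : l ∈ Icc lams (lams + h)) : |r l| ≤ M * ((l - lams) ^ 2 / 2 !) := by
    have := norm_sub_sub_smul_le_of_norm_deriv2_le hd1 hd2 (by simpa using hM) hl
    rw [Real.norm_eq_abs, smul_eq_mul, mul_comm] at this
    simpa [r, mul_div_assoc] using this
  have hmoment (n : ℕ) : ∫ l in lams..lams + h, exp (-l) * ((l - lams) ^ n / n !) =
      exp (-lams - h) * (exp h - ∑ k ∈ range (n + 1), h ^ k / k !) := by
    rw [integral_exp_neg_mul_pow_div_factorial, add_sub_cancel_left, mul_sub, ← exp_add,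
      sub_add_cancel, neg_add, ← sub_eq_add_neg]
  refine ⟨∫ l in lams..lams + h, exp (-l) * r l, ?_, ?_⟩
  · have hsplit (l : ℝ) : exp (-l) * ε l = ε lams * (exp (-l) * ((l - lams) ^ 0 / 0 !)) +
        ε' lams * (exp (-l) * ((l - lams) ^ 1 / 1 !)) + exp (-l) * r l := by
      simp only [r]; ring
    simp_rw [hsplit]
    rw [integral_add, integral_add, integral_const_mul, integral_const_mul, hmoment, hmoment]
    · simp [sum_range_succ]
      field_simp
      ring
    all_goals exact ContinuousOn.intervalIntegrable_of_Icc hab (by fun_prop)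
  · calc _ ≤ M * ∫ l in lams..lams + h, exp (-l) * ((l - lams) ^ 2 / 2 !) :=
          abs_integral_exp_neg_mul_le 2 hab hr_bound
      _ = _ := by
          rw [hmoment]
          simp [sum_range_succ]
          field_simp
          ring

/-- Second-order expansion of the exponentially weighted integral with remainder bound:
for `ε̂` C² on `[λ_s, λ_s + h]` with `|ε̂''| ≤ M` there,
`∫_{λ_s}^{λ_s+h} e^{−λ} ε̂(λ) dλ = e^{−λ_s−h}[h φ₁(h) ε̂(λ_s) + h² φ₂(h) ε̂'(λ_s)] + R`
with `|R| ≤ e^{−λ_s−h} · M · h³ φ₃(h)`. -/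
theorem stmt17 (lams h : ℝ) (hh : 0 < h) (ε ε' ε'' : ℝ → ℝ) (M : ℝ)
    (hd1 : ∀ l ∈ Set.Icc lams (lams + h), HasDerivAt ε (ε' l) l)
    (hd2 : ∀ l ∈ Set.Icc lams (lams + h), HasDerivAt ε' (ε'' l) l)
    (hc : ContinuousOn ε'' (Set.Icc lams (lams + h)))
    (hM : ∀ l ∈ Set.Icc lams (lams + h), |ε'' l| ≤ M) :
    ∃ R : ℝ,
      (∫ l in lams..lams + h, Real.exp (-l) * ε l) =
        Real.exp (-lams - h) *
          (h * ((Real.exp h - 1) / h) * ε lams +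
            h ^ 2 * ((Real.exp h - h - 1) / h ^ 2) * ε' lams) + R ∧
      |R| ≤ Real.exp (-lams - h) * M *
        (h ^ 3 * ((Real.exp h - h ^ 2 / 2 - h - 1) / h ^ 3)) :=
  stmt17_general lams h hh ε ε' ε'' M hd1 hd2 hM
end
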